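/- arXiv:1111.6201 — 6 statements merged into one kernel-verified Lean document; each statement's English description precedes it below -/
import Mathlib

section
/- Let B be an M×M orthogonal matrix with columns b₁,…,b_M and Σ* positive definite. Among all diagonal matrices H with positive entries, the function H ↦ L(B H Bᵀ, Σ*) = −(1/2)(M log 2π + log det(BHBᵀ) + tr((BHBᵀ)⁻¹Σ*)) is uniquely maximized by H* = diag(h₁*,…,h_M*) with hᵢ* = bᵢᵀ Σ* bᵢ. -/
open Matrix Finset

/-!
Conjugation by the orthogonal `B` preserves `log det` and turns the trace term into
`tr(H⁻¹ T)` with `T = Bᵀ Σ* B`, so for diagonal `H` the likelihood splits into a sum of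
`-(log hᵢ + tᵢᵢ / hᵢ) / 2`. Each summand is uniquely maximized at `hᵢ = tᵢᵢ > 0`, which is
`log x ≤ x - 1` (strict for `x ≠ 1`) at `x = tᵢᵢ / hᵢ`.
-/

/-- Expected Gaussian log-likelihood `L(Σ, Σ*)`. -/
noncomputable def LL (M : ℕ) (S T : Matrix (Fin M) (Fin M) ℝ) : ℝ :=
  -(1 / 2) * ((M : ℝ) * Real.log (2 * Real.pi) + Real.log S.det + (S⁻¹ * T).trace)

lemma Real.log_add_one_le_log_add_div {t d : ℝ} (ht : 0 < t) (hd : 0 < d) :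
    Real.log t + 1 ≤ Real.log d + t / d := by
  have h := Real.log_le_sub_one_of_pos (div_pos ht hd)
  rw [Real.log_div ht.ne' hd.ne'] at h
  linarith

lemma Real.log_add_one_lt_log_add_div {t d : ℝ} (ht : 0 < t) (hd : 0 < d) (hne : d ≠ t) :
    Real.log t + 1 < Real.log d + t / d := by
  have h := Real.log_lt_sub_one_of_pos (div_pos ht hd)
    (by rwa [Ne, div_eq_one_iff_eq hd.ne', eq_comm])
  rw [Real.log_div ht.ne' hd.ne'] at h
  linarith

lemma Matrix.PosDef.transpose_mul_mul_of_orthogonal {n : Type*} [Fintype n] [DecidableEq n]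
    {S B : Matrix n n ℝ} (hS : S.PosDef) (hB : Bᵀ * B = 1) : (Bᵀ * S * B).PosDef := by
  have hinj : Function.Injective B.mulVec :=
    Function.LeftInverse.injective (g := Bᵀ.mulVec) fun x => by
      rw [mulVec_mulVec, hB, one_mulVec]
  simpa only [conjTranspose_eq_transpose_of_trivial] using hS.conjTranspose_mul_mul_same hinj

section LL

variable {M : ℕ}

lemma LL_orthogonal_conj {B : Matrix (Fin M) (Fin M) ℝ} (hB : Bᵀ * B = 1)
    (S T : Matrix (Fin M) (Fin M) ℝ) : LL M (B * S * Bᵀ) T = LL M S (Bᵀ * T * B) := by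
  have hB' : B * Bᵀ = 1 := mul_eq_one_comm.mp hB
  have hinv : (B * S * Bᵀ)⁻¹ = B * S⁻¹ * Bᵀ := by
    rw [Matrix.mul_inv_rev, Matrix.mul_inv_rev, inv_eq_right_inv hB, inv_eq_left_inv hB,
      Matrix.mul_assoc]
  have htrace : (B * S⁻¹ * Bᵀ * T).trace = (S⁻¹ * (Bᵀ * T * B)).trace := by
    rw [Matrix.mul_assoc, Matrix.mul_assoc, trace_mul_comm, Matrix.mul_assoc, Matrix.mul_assoc]
  rw [LL, LL, det_conj_of_mul_eq_one hB' hB, hinv, htrace]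

lemma LL_diagonal {d : Fin M → ℝ} (hd : ∀ i, d i ≠ 0) (T : Matrix (Fin M) (Fin M) ℝ) :
    LL M (diagonal d) T =
      -(1 / 2) * ((M : ℝ) * Real.log (2 * Real.pi) + ∑ i, (Real.log (d i) + T i i / d i)) := by
  have hlog : Real.log (diagonal d).det = ∑ i, Real.log (d i) := by
    rw [det_diagonal, Real.log_prod fun i _ => hd i]
  have htrace : ((diagonal d)⁻¹ * T).trace = ∑ i, T i i / d i := by
    have hinv : (diagonal d)⁻¹ = diagonal d⁻¹ := inv_eq_right_inv <| by
      rw [diagonal_mul_diagonal, ← diagonal_one]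
      exact congrArg diagonal (funext fun i => mul_inv_cancel₀ (hd i))
    simp [hinv, trace, div_eq_inv_mul]
  rw [LL, hlog, htrace, sum_add_distrib, add_assoc]

variable {T : Matrix (Fin M) (Fin M) ℝ} {d : Fin M → ℝ}

lemma LL_diagonal_le (hT : ∀ i, 0 < T i i) (hd : ∀ i, 0 < d i) :
    LL M (diagonal d) T ≤ LL M (diagonal T.diag) T := by
  rw [LL_diagonal fun i => (hd i).ne', LL_diagonal (d := T.diag) fun i => (hT i).ne']
  have := sum_le_sum fun i (_ : i ∈ univ) => Real.log_add_one_le_log_add_div (hT i) (hd i)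
  simp only [diag_apply, div_self (hT _).ne']
  linarith

lemma LL_diagonal_lt (hT : ∀ i, 0 < T i i) (hd : ∀ i, 0 < d i) (hne : d ≠ T.diag) :
    LL M (diagonal d) T < LL M (diagonal T.diag) T := by
  rw [LL_diagonal fun i => (hd i).ne', LL_diagonal (d := T.diag) fun i => (hT i).ne']
  obtain ⟨j, hj⟩ := Function.ne_iff.mp hne
  have := sum_lt_sum (fun i (_ : i ∈ univ) => Real.log_add_one_le_log_add_div (hT i) (hd i))
    ⟨j, mem_univ j, Real.log_add_one_lt_log_add_div (hT j) (hd j) hj⟩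
  simp only [diag_apply, div_self (hT _).ne']
  linarith

end LL

/-- Over diagonal `H` with positive entries, `H ↦ L(BHBᵀ, Σ*)` is uniquely maximized at
`H* = diag(bᵢᵀ Σ* bᵢ)`. -/
theorem stmt4 (M : ℕ) (B Ss : Matrix (Fin M) (Fin M) ℝ)
    (hB : B.transpose * B = 1) (hSs : Ss.PosDef) :
    ∀ d : Fin M → ℝ, (∀ i, 0 < d i) →
      LL M (B * Matrix.diagonal d * B.transpose) Ss ≤
        LL M (B * Matrix.diagonal (fun i => (B.transpose * Ss * B) i i) * B.transpose) Ss ∧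
      (Matrix.diagonal d ≠ Matrix.diagonal (fun i => (B.transpose * Ss * B) i i) →
        LL M (B * Matrix.diagonal d * B.transpose) Ss <
          LL M (B * Matrix.diagonal (fun i => (B.transpose * Ss * B) i i) * B.transpose) Ss) := by
  intro d hd
  have hT : ∀ i, 0 < (Bᵀ * Ss * B) i i := fun _ =>
    (hSs.transpose_mul_mul_of_orthogonal hB).diag_pos
  rw [LL_orthogonal_conj hB, LL_orthogonal_conj hB]
  exact ⟨LL_diagonal_le hT hd,
    fun hne => LL_diagonal_lt hT hd fun h => hne (congrArg diagonal h)⟩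
end

section
/- Let M ≥ 2, r > 1, R = diag(r,1,…,1), F = 𝟙𝟙ᵀ (the all-ones M×M matrix), and Σ = R + F. If f = (f₁,…,f_M)ᵀ is an eigenvector of Σ corresponding to its largest eigenvalue, then f₂ = f₃ = ⋯ = f_M, and the largest eigenvalue equals q = (1/2)(M + r + 1 + √((M+r+1)² − 4(Mr+1))), with f₁/fᵢ = q − M for all i > 1. -/
/-!
With `d = (r, 1, …, 1)` and `S = ∑ fⱼ`, the eigen-equation reads `(q - dᵢ) fᵢ = S`.
For every root `Q` of `x² - (M + r + 1) x + (M r + 1)` the vector `(Q - M, 1, …, 1)` is an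
eigenvector with eigenvalue `Q`, so maximality gives `q ≥ Q₊ > r > 1`, where `Q₊` is the larger
root. Hence `q ≠ dᵢ` for all `i`, which forces `f₂ = ⋯ = f_M`, `f₁ = (q - M) f₂`, and makes `q`
itself a root of the same quadratic, i.e. `q = Q₊`.
-/

open Matrix

noncomputable def largerRoot (b c : ℝ) : ℝ := (1 / 2) * (b + Real.sqrt (b ^ 2 - 4 * c))

section LargerRoot

variable {b c : ℝ}

theorem largerRoot_isRoot (hD : 0 ≤ b ^ 2 - 4 * c) :
    largerRoot b c ^ 2 - b * largerRoot b c + c = 0 := by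
  have hs := Real.sq_sqrt hD
  unfold largerRoot
  linear_combination (1 / 4) * hs

theorem discrim_pos_of_neg {x : ℝ} (hx : x ^ 2 - b * x + c < 0) : 0 < b ^ 2 - 4 * c := by
  nlinarith [sq_nonneg (2 * x - b)]

theorem lt_largerRoot {x : ℝ} (hx : x ^ 2 - b * x + c < 0) : x < largerRoot b c := by
  have hD : (2 * x - b) ^ 2 < b ^ 2 - 4 * c := by linarith
  have hs : |2 * x - b| < Real.sqrt (b ^ 2 - 4 * c) := Real.lt_sqrt_of_sq_lt (by rwa [sq_abs])
  unfold largerRoot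
  linarith [le_abs_self (2 * x - b)]

theorem eq_largerRoot_of_isRoot_of_le (hD : 0 < b ^ 2 - 4 * c) {q : ℝ}
    (hq : q ^ 2 - b * q + c = 0) (hle : largerRoot b c ≤ q) : q = largerRoot b c := by
  have hs : 0 < Real.sqrt (b ^ 2 - 4 * c) := Real.sqrt_pos.mpr hD
  have hs2 := Real.sq_sqrt hD.le
  have hfac : (q - largerRoot b c) * (q - (b - Real.sqrt (b ^ 2 - 4 * c)) / 2) = 0 := by
    unfold largerRoot; linear_combination hq - (1 / 4) * hs2
  have hsmall : q - (b - Real.sqrt (b ^ 2 - 4 * c)) / 2 ≠ 0 := by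
    unfold largerRoot at hle; linarith
  exact sub_eq_zero.mp ((mul_eq_zero.mp hfac).resolve_right hsmall)

end LargerRoot

section DiagonalAddOnes

variable {n R : Type*} [Fintype n] [DecidableEq n] [CommRing R] {d v : n → R} {q : R}

theorem diagonal_add_of_one_mulVec (d v : n → R) :
    (diagonal d + of fun _ _ => (1 : R)) *ᵥ v = fun i => d i * v i + ∑ j, v j := by
  ext i
  rw [add_mulVec, Pi.add_apply, mulVec_diagonal]
  simp [mulVec, dotProduct]

theorem sub_mul_eq_sum_of_mulVec_eq (h : (diagonal d + of fun _ _ => (1 : R)) *ᵥ v = q • v)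
    (i : n) : (q - d i) * v i = ∑ j, v j := by
  have hi := congrFun h i
  rw [diagonal_add_of_one_mulVec] at hi
  simp only [Pi.smul_apply, smul_eq_mul] at hi
  linear_combination -hi

variable [IsDomain R]

theorem sum_ne_zero_of_mulVec_eq (h : (diagonal d + of fun _ _ => (1 : R)) *ᵥ v = q • v)
    (hv : v ≠ 0) (hq : ∀ i, q ≠ d i) : ∑ j, v j ≠ 0 := by
  intro hS
  refine hv (funext fun i => ?_)
  have hi := sub_mul_eq_sum_of_mulVec_eq h i
  rw [hS] at hi
  exact (mul_eq_zero.mp hi).resolve_left (sub_ne_zero.mpr (hq i))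

theorem apply_eq_of_mulVec_eq (h : (diagonal d + of fun _ _ => (1 : R)) *ᵥ v = q • v)
    {i j : n} (hij : d i = d j) (hq : q ≠ d i) : v i = v j := by
  have hi := sub_mul_eq_sum_of_mulVec_eq h i
  have hj := sub_mul_eq_sum_of_mulVec_eq h j
  rw [← hij, ← hi] at hj
  exact (mul_left_cancel₀ (sub_ne_zero.mpr hq) hj).symm

end DiagonalAddOnes

def spikeDiag (M : ℕ) (r : ℝ) : Fin M → ℝ := fun i => if (i : ℕ) = 0 then r else 1

section Spike

variable {M : ℕ} {r q : ℝ} {f : Fin M → ℝ}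

theorem sum_ite_val_eq_zero (hM : 0 < M) (a b : ℝ) :
    ∑ i : Fin M, (if (i : ℕ) = 0 then a else b) = a + (M - 1) * b := by
  obtain ⟨m, rfl⟩ := Nat.exists_eq_add_of_lt hM
  simp [Fin.sum_univ_succ]

theorem exists_spike_mulVec_eq_of_isRoot (hM : 1 < M) {Q : ℝ}
    (hQ : Q ^ 2 - (M + r + 1) * Q + (M * r + 1) = 0) :
    ∃ g ≠ 0, (diagonal (spikeDiag M r) + of fun _ _ => (1 : ℝ)) *ᵥ g = Q • g := by
  refine ⟨fun i => if (i : ℕ) = 0 then Q - M else 1, fun h => ?_, ?_⟩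
  · simpa using congrFun h ⟨1, hM⟩
  · ext i
    rw [diagonal_add_of_one_mulVec, sum_ite_val_eq_zero (by omega)]
    by_cases hi : (i : ℕ) = 0
    · simp only [spikeDiag, hi, if_true, Pi.smul_apply, smul_eq_mul]
      linear_combination -hQ
    · simp only [spikeDiag, hi, if_false, Pi.smul_apply, smul_eq_mul]
      ring

variable (heig : (diagonal (spikeDiag M r) + of fun _ _ => (1 : ℝ)) *ᵥ f = q • f)
include heig

theorem spike_apply_eq (hq : q ≠ 1) {i j : Fin M} (hi : (i : ℕ) ≠ 0) (hj : (j : ℕ) ≠ 0) :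
    f i = f j :=
  apply_eq_of_mulVec_eq heig (by simp [spikeDiag, hi, hj]) (by simpa [spikeDiag, hi])

theorem spike_sum_eq (hM : 0 < M) (hq : q ≠ 1) {i : Fin M} (hi : (i : ℕ) ≠ 0) :
    ∑ j, f j = f ⟨0, hM⟩ + (M - 1) * f i := by
  rw [← sum_ite_val_eq_zero hM]
  refine Finset.sum_congr rfl fun j _ => ?_
  split_ifs with hj
  · exact congrArg f (Fin.ext hj)
  · exact spike_apply_eq heig hq hj hi

theorem spike_apply_zero_eq (hM : 0 < M) (hq : q ≠ 1) {i : Fin M} (hi : (i : ℕ) ≠ 0) :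
    f ⟨0, hM⟩ = (q - M) * f i := by
  have h := sub_mul_eq_sum_of_mulVec_eq heig i
  rw [spike_sum_eq heig hM hq hi] at h
  simp only [spikeDiag, hi, if_false] at h
  linear_combination -h

theorem spike_isRoot (hM : 1 < M) (hf : f ≠ 0) (hq1 : q ≠ 1) (hqr : q ≠ r) :
    q ^ 2 - (M + r + 1) * q + (M * r + 1) = 0 := by
  have hS : ∑ j, f j ≠ 0 := sum_ne_zero_of_mulVec_eq heig hf fun i => by
    unfold spikeDiag; split_ifs <;> assumption
  have h0 := sub_mul_eq_sum_of_mulVec_eq heig ⟨0, by omega⟩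
  have h1 := sub_mul_eq_sum_of_mulVec_eq heig ⟨1, hM⟩
  simp only [spikeDiag, if_true, one_ne_zero, if_false] at h0 h1
  have hf1 : f ⟨1, hM⟩ ≠ 0 := fun h => hS (by rw [← h1, h, mul_zero])
  rw [spike_apply_zero_eq heig (by omega) hq1 (i := ⟨1, hM⟩) one_ne_zero] at h0
  have hprod : ((q - r) * (q - M) - (q - 1)) * f ⟨1, hM⟩ = 0 := by
    linear_combination h0 - h1
  linear_combination (mul_eq_zero.mp hprod).resolve_right hf1

end Spike

/-- For `Σ = diag(r,1,…,1) + 𝟙𝟙ᵀ` with `r > 1`, any top eigenvector `f` has equal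
components `f₂ = ⋯ = f_M`, the largest eigenvalue is
`q = (M + r + 1 + √((M+r+1)² − 4(Mr+1)))/2`, and `f₁ = (q − M) fᵢ` for `i > 1`. -/
theorem stmt6 (M : ℕ) (hM : 2 ≤ M) (r : ℝ) (hr : 1 < r)
    (f : Fin M → ℝ) (q : ℝ) (hf : f ≠ 0)
    (heig : (Matrix.diagonal (fun i : Fin M => if (i : ℕ) = 0 then r else 1) +
        Matrix.of fun _ _ : Fin M => (1 : ℝ)).mulVec f = q • f)
    (hmax : ∀ (μ : ℝ) (g : Fin M → ℝ), g ≠ 0 →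
      (Matrix.diagonal (fun i : Fin M => if (i : ℕ) = 0 then r else 1) +
        Matrix.of fun _ _ : Fin M => (1 : ℝ)).mulVec g = μ • g → μ ≤ q) :
    (∀ i j : Fin M, (i : ℕ) ≠ 0 → (j : ℕ) ≠ 0 → f i = f j) ∧
    q = (1 / 2) * ((M : ℝ) + r + 1 +
      Real.sqrt (((M : ℝ) + r + 1) ^ 2 - 4 * ((M : ℝ) * r + 1))) ∧
    ∀ i : Fin M, (i : ℕ) ≠ 0 → f ⟨0, by omega⟩ = (q - (M : ℝ)) * f i := by
  have hr_neg : r ^ 2 - (M + r + 1) * r + (M * r + 1) < 0 := by linarith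
  have hD := discrim_pos_of_neg hr_neg
  obtain ⟨g, hg, hgQ⟩ := exists_spike_mulVec_eq_of_isRoot hM (largerRoot_isRoot hD.le)
  have hQq : largerRoot _ _ ≤ q := hmax _ g hg hgQ
  have hrq : r < q := (lt_largerRoot hr_neg).trans_le hQq
  have hq1 : q ≠ 1 := by linarith
  exact ⟨fun i j hi hj => spike_apply_eq heig hq1 hi hj,
    eq_largerRoot_of_isRoot_of_le hD (spike_isRoot heig hM hf hq1 hrq.ne') hQq,
    fun i hi => spike_apply_zero_eq heig (by omega) hq1 hi⟩
end

section
/- The discriminant of s(q) = r q² − ((M−1)r + (r−1)λ' + 1) q + λ'(M−1)(r−1), viewed as a quadratic in q, is strictly positive for all r > 1, λ' > 0, and M ≥ 2; hence s(q) = 0 has two distinct real roots. -/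
/-! With `A = (M−1)r` and `B = (r−1)λ'` the linear coefficient is `A + B + 1` and
`4 · r · λ'(M−1)(r−1) = 4AB`, so the discriminant equals `(A − B)² + 2(A + B) + 1`,
which is positive as soon as `A, B ≥ 0`. -/

theorem exists_ne_quadratic_eq_zero_of_discrim_pos {a b c : ℝ} (ha : a ≠ 0)
    (h : 0 < discrim a b c) :
    ∃ x y : ℝ, x ≠ y ∧ a * (x * x) + b * x + c = 0 ∧ a * (y * y) + b * y + c = 0 := by
  set s := Real.sqrt (discrim a b c)
  have hs : discrim a b c = s * s := (Real.mul_self_sqrt h.le).symm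
  have hs0 : s ≠ 0 := (Real.sqrt_pos.mpr h).ne'
  refine ⟨(-b + s) / (2 * a), (-b - s) / (2 * a), ?_,
    (quadratic_eq_zero_iff ha hs _).mpr (Or.inl rfl),
    (quadratic_eq_zero_iff ha hs _).mpr (Or.inr rfl)⟩
  rw [Ne, div_left_inj' (mul_ne_zero two_ne_zero ha)]
  intro hx
  exact hs0 (by linarith)

theorem sq_add_add_one_sub_four_mul_pos {A B : ℝ} (hA : 0 ≤ A) (hB : 0 ≤ B) :
    0 < (A + B + 1) ^ 2 - 4 * A * B := by
  nlinarith [sq_nonneg (A - B)]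

/-- The discriminant of `s(q) = rq² − ((M−1)r + (r−1)λ' + 1)q + λ'(M−1)(r−1)` is
strictly positive for `r > 1`, `λ' > 0`, `M ≥ 2`; hence `s` has two distinct real roots. -/
theorem stmt8 (M : ℕ) (hM : 2 ≤ M) (r lam : ℝ) (hr : 1 < r) (hlam : 0 < lam) :
    0 < (((M : ℝ) - 1) * r + (r - 1) * lam + 1) ^ 2 -
        4 * r * (lam * ((M : ℝ) - 1) * (r - 1)) ∧
    ∃ q₁ q₂ : ℝ, q₁ ≠ q₂ ∧
      r * q₁ ^ 2 - (((M : ℝ) - 1) * r + (r - 1) * lam + 1) * q₁ +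
        lam * ((M : ℝ) - 1) * (r - 1) = 0 ∧
      r * q₂ ^ 2 - (((M : ℝ) - 1) * r + (r - 1) * lam + 1) * q₂ +
        lam * ((M : ℝ) - 1) * (r - 1) = 0 := by
  have hM1 : (0 : ℝ) ≤ (M : ℝ) - 1 := by
    have : (2 : ℝ) ≤ M := by exact_mod_cast hM
    linarith
  have hΔ := sq_add_add_one_sub_four_mul_pos (mul_nonneg hM1 (by linarith : (0 : ℝ) ≤ r))
    (mul_nonneg (by linarith : (0 : ℝ) ≤ r - 1) hlam.le)
  have hdiscrim : discrim r (-(((M : ℝ) - 1) * r + (r - 1) * lam + 1))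
      (lam * ((M : ℝ) - 1) * (r - 1)) =
      (((M : ℝ) - 1) * r + (r - 1) * lam + 1) ^ 2 -
        4 * (((M : ℝ) - 1) * r) * ((r - 1) * lam) := by
    rw [discrim]; ring
  refine ⟨by linarith, ?_⟩
  obtain ⟨q₁, q₂, hne, h₁, h₂⟩ :=
    exists_ne_quadratic_eq_zero_of_discrim_pos (zero_lt_one.trans hr).ne' (hdiscrim ▸ hΔ)
  exact ⟨q₁, q₂, hne, by linear_combination h₁, by linear_combination h₂⟩
end

section
/- For the K characterized above, the eigenvalue vector (h₁,…,h_M) is the unique solution to the system h_m = max{s_m − λ', 1/v} for all m together with Σ_m h_m = Σ_m s_m, v > 0. -/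
/-!
The trace `t ↦ ∑ₘ max (sₘ - λ') t` is nondecreasing in the level `t`, and strictly increasing
through any level `t` that exceeds some `sₘ - λ'`. The water level
`c = (K λ' + ∑_{m>K} sₘ) / (M - K)` is such a level: the average of `sₘ - λ'` over `m > K` is
`c - M λ' / (M - K) < c`. Hence `1 / v` and `c`, which give the same trace, are equal, and then
`hₘ = max (sₘ - λ') c` is the water-filling solution.
-/

open Finset

section SumMax

variable {ι R : Type*} [AddCommMonoid R] [LinearOrder R] [IsOrderedCancelAddMonoid R]
  {S : Finset ι} {a : ι → R} {i : ι}

theorem sum_max_lt_sum_max {u t : R} (hut : u < t) (hi : i ∈ S) (hai : a i < t) :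
    ∑ j ∈ S, max (a j) u < ∑ j ∈ S, max (a j) t := by
  refine Finset.sum_lt_sum (fun j _ => max_le_max le_rfl hut.le) ⟨i, hi, ?_⟩
  rw [max_eq_right hai.le]
  exact max_lt hai hut

theorem eq_of_sum_max_eq_sum_max {u t : R} (h : ∑ j ∈ S, max (a j) u = ∑ j ∈ S, max (a j) t)
    (hi : i ∈ S) (hai : a i < t) : u = t := by
  rcases lt_trichotomy u t with hut | hut | htu
  · exact absurd h (sum_max_lt_sum_max hut hi hai).ne
  · exact hut
  · exact absurd h (sum_max_lt_sum_max htu hi (hai.trans htu)).ne'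

end SumMax

theorem exists_sub_lt_waterLevel {K M : ℕ} (hK : K < M) {lam : ℝ} (hlam : 0 < lam)
    (s : ℕ → ℝ) :
    ∃ m ∈ Icc (K + 1) M,
      s m - lam < ((K : ℝ) * lam + ∑ m ∈ Icc (K + 1) M, s m) / ((M : ℝ) - K) := by
  set c := ((K : ℝ) * lam + ∑ m ∈ Icc (K + 1) M, s m) / ((M : ℝ) - K)
  have hMK : (0 : ℝ) < (M : ℝ) - K := sub_pos.mpr (by exact_mod_cast hK)
  have hcard : ((Icc (K + 1) M).card : ℝ) = (M : ℝ) - K := by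
    rw [Nat.card_Icc, Nat.add_sub_add_right, Nat.cast_sub hK.le]
  apply Finset.exists_lt_of_sum_lt
  have hc : c * ((M : ℝ) - K) = K * lam + ∑ m ∈ Icc (K + 1) M, s m := div_mul_cancel₀ _ hMK.ne'
  have hM : (0 : ℝ) < M * lam := mul_pos (by exact_mod_cast (K.zero_le.trans_lt hK)) hlam
  rw [Finset.sum_sub_distrib, Finset.sum_const, Finset.sum_const, nsmul_eq_mul, nsmul_eq_mul,
    hcard]
  linarith

theorem stmt15_general (M : ℕ) (s : ℕ → ℝ) (lam : ℝ) (hlam : 0 < lam)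
    (K : ℕ) (hK : K < M)
    (hGood :
      (∀ m ∈ Finset.Icc 1 M,
        (if m ≤ K then s m - lam
          else ((K : ℝ) * lam + ∑ m ∈ Finset.Icc (K + 1) M, s m) / ((M : ℝ) - K)) =
        max (s m - lam)
          (((K : ℝ) * lam + ∑ m ∈ Finset.Icc (K + 1) M, s m) / ((M : ℝ) - K))) ∧
      (∑ m ∈ Finset.Icc 1 M,
          (if m ≤ K then s m - lam
            else ((K : ℝ) * lam + ∑ m ∈ Finset.Icc (K + 1) M, s m) / ((M : ℝ) - K)) =
        ∑ m ∈ Finset.Icc 1 M, s m)) :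
    ∀ (v : ℝ) (h' : ℕ → ℝ), 0 < v →
      (∀ m ∈ Finset.Icc 1 M, h' m = max (s m - lam) v⁻¹) →
      (∑ m ∈ Finset.Icc 1 M, h' m = ∑ m ∈ Finset.Icc 1 M, s m) →
      (v⁻¹ = ((K : ℝ) * lam + ∑ m ∈ Finset.Icc (K + 1) M, s m) / ((M : ℝ) - K) ∧
        ∀ m ∈ Finset.Icc 1 M, h' m =
          (if m ≤ K then s m - lam
            else ((K : ℝ) * lam + ∑ m ∈ Finset.Icc (K + 1) M, s m) / ((M : ℝ) - K))) := by
  intro v h' _ hmax hsum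
  obtain ⟨hpoint, htrace⟩ := hGood
  set c := ((K : ℝ) * lam + ∑ m ∈ Icc (K + 1) M, s m) / ((M : ℝ) - K)
  have htrace_c : ∑ m ∈ Icc 1 M, max (s m - lam) c = ∑ m ∈ Icc 1 M, s m := by
    rw [← htrace]
    exact Finset.sum_congr rfl fun m hm => (hpoint m hm).symm
  have htrace_v : ∑ m ∈ Icc 1 M, max (s m - lam) v⁻¹ = ∑ m ∈ Icc 1 M, s m := by
    rw [← hsum]
    exact Finset.sum_congr rfl fun m hm => (hmax m hm).symm
  obtain ⟨m₀, hm₀, hlt⟩ := exists_sub_lt_waterLevel hK hlam s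
  have hm₀' : m₀ ∈ Icc 1 M := Finset.Icc_subset_Icc_left (Nat.le_add_left 1 K) hm₀
  have hv : v⁻¹ = c := eq_of_sum_max_eq_sum_max (htrace_v.trans htrace_c.symm) hm₀' hlt
  exact ⟨hv, fun m hm => by rw [hmax m hm, hv, hpoint m hm]⟩

/-- For the water-filling threshold index `K` (characterized by the max/trace
conditions), the pair `(v, (h_m))` with `v⁻¹ = (Kλ' + Σ_{m>K} s_m)/(M−K)`,
`h_m = s_m − λ'` for `m ≤ K`, `h_m = v⁻¹` otherwise, is the unique solution of
`h_m = max{s_m − λ', 1/v}` for all `m` together with `Σ h_m = Σ s_m`, `v > 0`. -/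
theorem stmt15 (M : ℕ) (hM : 0 < M) (s : ℕ → ℝ) (lam : ℝ) (hlam : 0 < lam)
    (hmono : ∀ i j, 1 ≤ i → i ≤ j → j ≤ M → s j ≤ s i)
    (hnn : ∀ m, 1 ≤ m → m ≤ M → 0 ≤ s m)
    (K : ℕ) (hK : K < M)
    (hGood :
      (∀ m ∈ Finset.Icc 1 M,
        (if m ≤ K then s m - lam
          else ((K : ℝ) * lam + ∑ m ∈ Finset.Icc (K + 1) M, s m) / ((M : ℝ) - K)) =
        max (s m - lam)
          (((K : ℝ) * lam + ∑ m ∈ Finset.Icc (K + 1) M, s m) / ((M : ℝ) - K))) ∧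
      (∑ m ∈ Finset.Icc 1 M,
          (if m ≤ K then s m - lam
            else ((K : ℝ) * lam + ∑ m ∈ Finset.Icc (K + 1) M, s m) / ((M : ℝ) - K)) =
        ∑ m ∈ Finset.Icc 1 M, s m)) :
    ∀ (v : ℝ) (h' : ℕ → ℝ), 0 < v →
      (∀ m ∈ Finset.Icc 1 M, h' m = max (s m - lam) v⁻¹) →
      (∑ m ∈ Finset.Icc 1 M, h' m = ∑ m ∈ Finset.Icc 1 M, s m) →
      (v⁻¹ = ((K : ℝ) * lam + ∑ m ∈ Finset.Icc (K + 1) M, s m) / ((M : ℝ) - K) ∧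
        ∀ m ∈ Finset.Icc 1 M, h' m =
          (if m ≤ K then s m - lam
            else ((K : ℝ) * lam + ∑ m ∈ Finset.Icc (K + 1) M, s m) / ((M : ℝ) - K))) :=
  stmt15_general M s lam hlam K hK hGood
end

section
/- Let V be diagonal positive definite, Σ_SAM symmetric, λ' > 0, and let U D Uᵀ be an orthogonal eigendecomposition of C = V^{1/2}(Σ_SAM − λ' I)V^{1/2}. Define L diagonal with Lᵢᵢ = max{Dᵢᵢ, 1} and Σ̂ = V^{-1/2} U L Uᵀ V^{-1/2}. Then Ĝ := V − Σ̂⁻¹ is symmetric positive semidefinite with rank(Ĝ) = |{i : Dᵢᵢ > 1}|. -/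
open Matrix

/-- Lemma GV structure: with `V` diagonal positive definite, `Σ_SAM` symmetric,
`λ' > 0`, `C = V^{1/2}(Σ_SAM − λ'I)V^{1/2} = U D Uᵀ` (U orthogonal, D diagonal),
`L = diag(max{Dᵢᵢ,1})` and `Σ̂ = V^{-1/2} U L Uᵀ V^{-1/2}`, the matrix
`Ĝ = V − Σ̂⁻¹` is symmetric PSD with rank `|{i : Dᵢᵢ > 1}|`. -/
theorem stmt17 (M : ℕ) (v : Fin M → ℝ) (hv : ∀ i, 0 < v i)
    (SSAM : Matrix (Fin M) (Fin M) ℝ) (hS : SSAM.IsSymm) (lam : ℝ) (hlam : 0 < lam)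
    (U : Matrix (Fin M) (Fin M) ℝ) (d : Fin M → ℝ)
    (hU : U.transpose * U = 1)
    (hC : Matrix.diagonal (fun i => Real.sqrt (v i)) * (SSAM - lam • 1) *
        Matrix.diagonal (fun i => Real.sqrt (v i)) =
      U * Matrix.diagonal d * U.transpose) :
    (Matrix.diagonal v -
        (Matrix.diagonal (fun i => (Real.sqrt (v i))⁻¹) * U *
          Matrix.diagonal (fun i => max (d i) 1) * U.transpose *
          Matrix.diagonal (fun i => (Real.sqrt (v i))⁻¹))⁻¹).PosSemidef ∧
    (Matrix.diagonal v -
        (Matrix.diagonal (fun i => (Real.sqrt (v i))⁻¹) * U *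
          Matrix.diagonal (fun i => max (d i) 1) * U.transpose *
          Matrix.diagonal (fun i => (Real.sqrt (v i))⁻¹))⁻¹).rank =
      (Finset.univ.filter fun i : Fin M => 1 < d i).card := by
  set s : Fin M → ℝ := fun i => Real.sqrt (v i) with hs
  have hspos : ∀ i, 0 < s i := fun i => Real.sqrt_pos.mpr (hv i)
  set g : Fin M → ℝ := fun i => max (d i) 1 with hg
  have hgpos : ∀ i, 0 < g i := fun i => lt_of_lt_of_le one_pos (le_max_right _ _)
  have hUU : U * U.transpose = 1 := mul_eq_one_comm.mp hU
  have h1 : Matrix.diagonal (fun i => (s i)⁻¹) * Matrix.diagonal s = 1 := by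
    rw [Matrix.diagonal_mul_diagonal, ← Matrix.diagonal_one]
    exact congrArg Matrix.diagonal (funext fun i => inv_mul_cancel₀ (hspos i).ne')
  have h2 : Matrix.diagonal g * Matrix.diagonal (fun i => (g i)⁻¹) = 1 := by
    rw [Matrix.diagonal_mul_diagonal, ← Matrix.diagonal_one]
    exact congrArg Matrix.diagonal (funext fun i => mul_inv_cancel₀ (hgpos i).ne')
  -- the inverse of Σ̂
  have hinv :
      (Matrix.diagonal (fun i => (s i)⁻¹) * U * Matrix.diagonal g * U.transpose *
          Matrix.diagonal (fun i => (s i)⁻¹))⁻¹ =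
      Matrix.diagonal s * U * Matrix.diagonal (fun i => (g i)⁻¹) * U.transpose *
          Matrix.diagonal s := by
    apply Matrix.inv_eq_right_inv
    simp only [Matrix.mul_assoc]
    rw [← Matrix.mul_assoc (Matrix.diagonal (fun i => (s i)⁻¹)) (Matrix.diagonal s), h1,
      Matrix.one_mul, ← Matrix.mul_assoc U.transpose U, hU, Matrix.one_mul,
      ← Matrix.mul_assoc (Matrix.diagonal g), h2, Matrix.one_mul,
      ← Matrix.mul_assoc U U.transpose, hUU, Matrix.one_mul, h1]
  have hv_eq : Matrix.diagonal v = Matrix.diagonal s * U * Matrix.diagonal (fun _ => (1:ℝ)) *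
      U.transpose * Matrix.diagonal s := by
    rw [Matrix.diagonal_one, Matrix.mul_one]
    simp only [Matrix.mul_assoc]
    rw [← Matrix.mul_assoc U U.transpose, hUU, Matrix.one_mul, Matrix.diagonal_mul_diagonal]
    exact congrArg Matrix.diagonal (funext fun i => (Real.mul_self_sqrt (hv i).le).symm)
  have hdsplit : Matrix.diagonal (fun i => 1 - (g i)⁻¹) =
      Matrix.diagonal (fun _ : Fin M => (1:ℝ)) - Matrix.diagonal (fun i => (g i)⁻¹) := by
    rw [Matrix.diagonal_sub]
  have hfact : Matrix.diagonal v -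
      (Matrix.diagonal (fun i => (s i)⁻¹) * U * Matrix.diagonal g * U.transpose *
          Matrix.diagonal (fun i => (s i)⁻¹))⁻¹ =
      (Matrix.diagonal s * U) * Matrix.diagonal (fun i => 1 - (g i)⁻¹) *
        (Matrix.diagonal s * U).conjTranspose := by
    have hct : (Matrix.diagonal s * U).conjTranspose = U.transpose * Matrix.diagonal s := by
      simp [Matrix.conjTranspose_mul, Matrix.conjTranspose_eq_transpose_of_trivial,
        Matrix.diagonal_transpose]
    rw [hinv, hv_eq, hct, hdsplit]
    simp only [Matrix.mul_sub, Matrix.sub_mul, Matrix.mul_assoc]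
  have hdiagPSD : (Matrix.diagonal (fun i => 1 - (g i)⁻¹)).PosSemidef := by
    refine Matrix.posSemidef_diagonal_iff.mpr fun i => ?_
    have : (g i)⁻¹ ≤ 1 := by
      rw [inv_le_one_iff₀]
      right; exact le_max_right _ _
    linarith
  constructor
  · rw [hfact]
    exact hdiagPSD.mul_mul_conjTranspose_same _
  · rw [hfact]
    have hdetU : IsUnit U.det := Matrix.isUnit_det_of_right_inverse hUU
    have hdets : IsUnit (Matrix.diagonal s).det := by
      rw [Matrix.det_diagonal]
      exact (Finset.prod_pos fun i _ => hspos i).ne'.isUnit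
    have hleft : IsUnit (Matrix.diagonal s * U).det := by
      rw [Matrix.det_mul]; exact hdets.mul hdetU
    have hright : IsUnit (Matrix.diagonal s * U).conjTranspose.det := by
      rw [Matrix.det_conjTranspose]
      exact hleft.star
    rw [Matrix.rank_mul_eq_left_of_isUnit_det _ _ hright,
      Matrix.rank_mul_eq_right_of_isUnit_det _ _ hleft, Matrix.rank_diagonal]
    rw [Fintype.card_subtype]
    congr 1
    apply Finset.filter_congr
    intro i _
    constructor
    · intro h
      by_contra hle
      push_neg at hle
      apply h
      have : g i = 1 := max_eq_right hle
      simp [this]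
    · intro h
      have hgi : g i = d i := max_eq_left h.le
      have h1 : (g i)⁻¹ < 1 := by
        rw [hgi]; exact inv_lt_one_of_one_lt₀ h
      intro hc
      rw [sub_eq_zero] at hc
      linarith [hc.symm]
end

section
/- Let R = diag(r,1,…,1) with r > 1 and Σ* = R + 𝟙𝟙ᵀ, M ≥ 2, λ' > 0. Then C := R^{-1/2}(Σ* − λ'I)R^{-1/2} = (1 − λ')I + A where A = aaᵀ + λ'(1 − 1/r)e₁e₁ᵀ, a = (1/√r, 1, …, 1)ᵀ, e₁ the first standard basis vector, and rank(A) = 2. -/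
/-!
Conjugating by `R^{-1/2}` turns the all-ones part `𝟙𝟙ᵀ` of `Σ*` into `aaᵀ` and the diagonal part
`R - λ'I` into `diag(1 - λ'/r, 1 - λ', …, 1 - λ')`, whose deviation from `(1 - λ')I` is
`λ'(1 - 1/r)e₁e₁ᵀ`. Since `λ'(1 - 1/r) = s²` with `s > 0`, the matrix `A` is the Gram matrix `BᵀB`
of the rows `a` and `s e₁`; these are independent because `a` has a nonzero entry off the first
coordinate, so `rank A = rank B = 2`.
-/

open Matrix

section

variable {n R : Type*} [CommRing R]

theorem of_ite_and_eq_vecMulVec (p : n → Prop) [DecidablePred p] :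
    (of fun i j => if p i ∧ p j then (1 : R) else 0) =
      vecMulVec (fun i => if p i then 1 else 0) (fun i => if p i then 1 else 0) := by
  ext i j
  rw [of_apply, vecMulVec_apply, ite_zero_mul_ite_zero, mul_one]

variable [Fintype n] [DecidableEq n]

theorem diagonal_mul_diagonal_add_ones_sub_smul_mul_diagonal (a d : n → R) (c : R) :
    diagonal a * ((diagonal d + of fun _ _ => (1 : R)) - c • 1) * diagonal a =
      diagonal (fun i => a i * (d i - c) * a i) + vecMulVec a a := by
  ext i j
  rw [mul_diagonal, diagonal_mul]
  by_cases hij : i = j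
  · subst hij
    simp only [Matrix.sub_apply, Matrix.add_apply, diagonal_apply_eq, of_apply, Matrix.smul_apply,
      one_apply_eq, smul_eq_mul, mul_one, vecMulVec_apply]
    ring
  · simp [hij, vecMulVec_apply, one_apply_ne hij]

end

theorem diagonal_headScale_conj_sub_smul {M : ℕ} {r : ℝ} (hr : 0 < r) (c : ℝ) :
    diagonal (fun i : Fin M => (if (i : ℕ) = 0 then (√r)⁻¹ else 1) *
        ((if (i : ℕ) = 0 then r else 1) - c) * (if (i : ℕ) = 0 then (√r)⁻¹ else 1)) =
      (1 - c) • (1 : Matrix (Fin M) (Fin M) ℝ) +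
        (c * (1 - 1 / r)) • of fun i j : Fin M => if (i : ℕ) = 0 ∧ (j : ℕ) = 0 then 1 else 0 := by
  have hsq : (√r)⁻¹ * (√r)⁻¹ = r⁻¹ := by rw [← mul_inv, Real.mul_self_sqrt hr.le]
  ext i j
  by_cases hij : i = j
  · subst hij
    by_cases hi : (i : ℕ) = 0
    · simp only [diagonal_apply_eq, hi, if_true, and_self, Matrix.add_apply, Matrix.smul_apply,
        one_apply_eq, of_apply, smul_eq_mul]
      rw [mul_right_comm, hsq]
      field_simp
      ring
    · simp [hi]
  · have : ¬((i : ℕ) = 0 ∧ (j : ℕ) = 0) := fun h => hij (Fin.ext (h.1.trans h.2.symm))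
    simp [hij, this]

theorem linearIndependent_pair_of_apply {n K : Type*} [Field K] {u v : n → K} {i j : n}
    (hu : u j ≠ 0) (hv : v j = 0) (hv' : v i ≠ 0) : LinearIndependent K ![u, v] := by
  refine LinearIndependent.pair_iff.mpr fun s t hst => ?_
  have hs : s = 0 := by simpa [hv, hu] using congrFun hst j
  subst hs
  exact ⟨rfl, by simpa [hv'] using congrFun hst i⟩

theorem rank_vecMulVec_add_smul_vecMulVec {n : Type*} [Fintype n] {u v : n → ℝ} {c : ℝ}
    (hc : 0 < c) (huv : LinearIndependent ℝ ![u, v]) :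
    (vecMulVec u u + c • vecMulVec v v).rank = 2 := by
  set B : Matrix (Fin 2) n ℝ := of ![u, √c • v]
  have hB : vecMulVec u u + c • vecMulVec v v = Bᵀ * B := by
    ext i j
    have hsq : √c * √c = c := Real.mul_self_sqrt hc.le
    simp only [B, Matrix.add_apply, Matrix.smul_apply, vecMulVec_apply, mul_apply,
      transpose_apply, of_apply, Fin.sum_univ_two, Matrix.cons_val_zero, Matrix.cons_val_one,
      Pi.smul_apply, smul_eq_mul]
    linear_combination (-(v i * v j)) * hsq
  have hrows : LinearIndependent ℝ B.row :=
    LinearIndependent.pair_iff.mpr fun s t hst => by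
      have := LinearIndependent.pair_iff.mp huv s (t * √c) (by simpa [B, row, mul_smul] using hst)
      exact ⟨this.1, (mul_eq_zero.mp this.2).resolve_right (Real.sqrt_pos.mpr hc).ne'⟩
  rw [hB, rank_transpose_mul_self, rank_eq_finrank_span_row, finrank_span_eq_card hrows,
    Fintype.card_fin]

/-- With `R = diag(r,1,…,1)`, `Σ* = R + 𝟙𝟙ᵀ`,
`C := R^{-1/2}(Σ* − λ'I)R^{-1/2} = (1 − λ')I + A` where
`A = aaᵀ + λ'(1 − 1/r)e₁e₁ᵀ`, `a = (1/√r, 1, …, 1)ᵀ`, and `rank A = 2`. -/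
theorem stmt18 (M : ℕ) (hM : 2 ≤ M) (r lam : ℝ) (hr : 1 < r) (hlam : 0 < lam) :
    (Matrix.diagonal (fun i : Fin M => if (i : ℕ) = 0 then (Real.sqrt r)⁻¹ else 1) *
        ((Matrix.diagonal (fun i : Fin M => if (i : ℕ) = 0 then r else 1) +
            Matrix.of fun _ _ : Fin M => (1 : ℝ)) - lam • 1) *
        Matrix.diagonal (fun i : Fin M => if (i : ℕ) = 0 then (Real.sqrt r)⁻¹ else 1) =
      (1 - lam) • (1 : Matrix (Fin M) (Fin M) ℝ) +
        (vecMulVec (fun i : Fin M => if (i : ℕ) = 0 then (Real.sqrt r)⁻¹ else 1)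
            (fun i : Fin M => if (i : ℕ) = 0 then (Real.sqrt r)⁻¹ else 1) +
          (lam * (1 - 1 / r)) •
            Matrix.of fun i j : Fin M =>
              if (i : ℕ) = 0 ∧ (j : ℕ) = 0 then (1 : ℝ) else 0)) ∧
    (vecMulVec (fun i : Fin M => if (i : ℕ) = 0 then (Real.sqrt r)⁻¹ else 1)
        (fun i : Fin M => if (i : ℕ) = 0 then (Real.sqrt r)⁻¹ else 1) +
      (lam * (1 - 1 / r)) •
        Matrix.of fun i j : Fin M =>
          if (i : ℕ) = 0 ∧ (j : ℕ) = 0 then (1 : ℝ) else 0).rank = 2 := by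
  have hr0 : 0 < r := one_pos.trans hr
  refine ⟨?_, ?_⟩
  · rw [diagonal_mul_diagonal_add_ones_sub_smul_mul_diagonal, diagonal_headScale_conj_sub_smul hr0]
    abel
  · have hc : 0 < lam * (1 - 1 / r) := mul_pos hlam (by simpa using inv_lt_one_of_one_lt₀ hr)
    rw [of_ite_and_eq_vecMulVec]
    refine rank_vecMulVec_add_smul_vecMulVec hc
      (linearIndependent_pair_of_apply (i := ⟨0, by omega⟩) (j := ⟨1, by omega⟩) ?_ ?_ ?_) <;>
      simp
end
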